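/- arXiv:1504.05835 — 4 statements merged into one kernel-verified Lean document; each statement's English description precedes it below -/
import Mathlib

section
/- Let p ∈ (0,1) and let w, x be real numbers with |x| < w (so that w + x > 0 and w − x > 0). Then ∫₀^∞ z^{1/2} · r_{1/2}( (w+x) z / (2p²) ) · r_{1/2}( (w−x) z / (2(1−p)²) ) dz = (2^{3/2}/√π) · p³ (1−p)³ · ( p² (w−x) + (1−p)² (w+x) )^{−3/2}. -/
/-! With `a = (w+x)/(2p²)` and `b = (w−x)/(2(1−p)²)`, the integrand is `z^{1/2} r(az) r(bz)`, a
constant multiple of `z^{−5/2} e^{−c/z}` with `c = 1/(4a) + 1/(4b)`. The substitution `z ↦ 1/z`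
turns this into a Gamma integral, which gives `∫₀^∞ z^{1/2} r(az) r(bz) dz = (a+b)^{−3/2}/√π`;
finally `a + b = (p²(w−x) + (1−p)²(w+x)) / (2p²(1−p)²)`. -/

open MeasureTheory Set

/-- The density of the one-sided 1/2-stable (Lévy) distribution:
`r_{1/2}(x) = (1/(2√π)) x^{−3/2} exp(−1/(4x))` for `x > 0`, and `0` for `x ≤ 0`. -/
noncomputable def levyHalf (x : ℝ) : ℝ :=
  if 0 < x then (1 / (2 * Real.sqrt Real.pi)) * x ^ (-(3:ℝ)/2) * Real.exp (-1 / (4 * x)) else 0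

open Real

theorem integral_rpow_neg_mul_exp_neg_div_Ioi {s c : ℝ} (hs : 0 < s) (hc : 0 < c) :
    ∫ z in Ioi (0:ℝ), z ^ (-(s + 1)) * exp (-(c / z)) = (1 / c) ^ s * Gamma s := by
  rw [← integral_rpow_mul_exp_neg_mul_Ioi hs hc,
    ← integral_comp_rpow_Ioi (fun t ↦ t ^ (s - 1) * exp (-(c * t))) (p := -1) (by norm_num)]
  refine setIntegral_congr_fun measurableSet_Ioi fun z (hz : 0 < z) ↦ ?_
  have hpow : z ^ (-(s + 1)) = z ^ ((-1:ℝ) - 1) * (z ^ (-1:ℝ)) ^ (s - 1) := by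
    rw [← rpow_mul hz.le, ← rpow_add hz]; ring_nf
  rw [hpow, rpow_neg_one, smul_eq_mul, div_eq_mul_inv]
  norm_num
  ring

theorem rpow_half_mul_levyHalf_mul_levyHalf {a b z : ℝ} (ha : 0 < a) (hb : 0 < b) (hz : 0 < z) :
    z ^ ((1:ℝ)/2) * levyHalf (a * z) * levyHalf (b * z)
      = (4 * π)⁻¹ * (a * b) ^ (-((3:ℝ)/2)) *
          (z ^ (-((3:ℝ)/2 + 1)) * exp (-(((4 * a)⁻¹ + (4 * b)⁻¹) / z))) := by
  have hexp : exp (-1 / (4 * (a * z))) * exp (-1 / (4 * (b * z)))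
      = exp (-(((4 * a)⁻¹ + (4 * b)⁻¹) / z)) := by
    rw [← exp_add]; congr 1; field_simp; ring
  have hz_pow : z ^ ((1:ℝ)/2) * (z ^ (-(3:ℝ)/2) * z ^ (-(3:ℝ)/2)) = z ^ (-((3:ℝ)/2 + 1)) := by
    rw [← rpow_add hz, ← rpow_add hz]; norm_num
  have hsqrt : (2 * √π) * (2 * √π) = 4 * π := by
    rw [show (2 * √π) * (2 * √π) = 4 * (√π * √π) by ring, mul_self_sqrt pi_pos.le]
  rw [levyHalf, levyHalf, if_pos (by positivity), if_pos (by positivity), mul_rpow ha.le hz.le,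
    mul_rpow hb.le hz.le, mul_rpow ha.le hb.le, ← hexp, ← hz_pow, ← hsqrt, neg_div]
  ring

theorem integral_rpow_half_mul_levyHalf_mul_levyHalf {a b : ℝ} (ha : 0 < a) (hb : 0 < b) :
    ∫ z in Ioi (0:ℝ), z ^ ((1:ℝ)/2) * levyHalf (a * z) * levyHalf (b * z)
      = (a + b) ^ (-((3:ℝ)/2)) / √π := by
  rw [setIntegral_congr_fun measurableSet_Ioi fun z (hz : 0 < z) ↦
      rpow_half_mul_levyHalf_mul_levyHalf ha hb hz,
    integral_const_mul, integral_rpow_neg_mul_exp_neg_div_Ioi (by norm_num) (by positivity)]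
  have hc : 1 / ((4 * a)⁻¹ + (4 * b)⁻¹) = 4 * (a * b) / (a + b) := by field_simp; ring
  have h4 : (4:ℝ) ^ ((3:ℝ)/2) = 8 := by
    rw [show (4:ℝ) = 2 ^ 2 by norm_num, ← rpow_natCast_mul (by norm_num)]; norm_num
  have hΓ : Gamma ((3:ℝ)/2) = √π / 2 := by
    convert Gamma_nat_add_one_add_half 0 using 2 <;> norm_num
  have hab : 0 < a * b := by positivity
  rw [hc, hΓ, div_rpow (by positivity) (by positivity), mul_rpow (by norm_num) hab.le, h4,
    rpow_neg hab.le, rpow_neg (by positivity)]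
  field_simp
  rw [sq_sqrt pi_pos.le]
  ring

/-- For `p ∈ (0,1)` and `|x| < w`,
`∫₀^∞ z^{1/2} r_{1/2}((w+x)z/(2p²)) r_{1/2}((w−x)z/(2(1−p)²)) dz
  = (2^{3/2}/√π) p³ (1−p)³ (p²(w−x) + (1−p)²(w+x))^{−3/2}`. -/
theorem integral_product_levyHalf (p w x : ℝ) (hp : p ∈ Ioo (0:ℝ) 1) (hxw : |x| < w) :
    ∫ z in Ioi (0:ℝ),
        z ^ ((1:ℝ)/2) * levyHalf ((w + x) * z / (2 * p^2)) *
          levyHalf ((w - x) * z / (2 * (1 - p)^2))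
      = (2:ℝ) ^ ((3:ℝ)/2) / Real.sqrt Real.pi * (p^3 * (1 - p)^3) *
          (p^2 * (w - x) + (1 - p)^2 * (w + x)) ^ (-(3:ℝ)/2) := by
  obtain ⟨hp0, hp1⟩ := hp
  obtain ⟨hx_gt, hx_lt⟩ := abs_lt.mp hxw
  have hq : 0 < 1 - p := by linarith
  have ha : 0 < (w + x) / (2 * p ^ 2) := by apply div_pos <;> [linarith; positivity]
  have hb : 0 < (w - x) / (2 * (1 - p) ^ 2) := by apply div_pos <;> [linarith; positivity]
  have hS : 0 < p ^ 2 * (w - x) + (1 - p) ^ 2 * (w + x) := by nlinarith [mul_pos hq hq]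
  have hsum : (w + x) / (2 * p ^ 2) + (w - x) / (2 * (1 - p) ^ 2)
      = (p ^ 2 * (w - x) + (1 - p) ^ 2 * (w + x)) / (2 * (p * (1 - p)) ^ 2) := by
    field_simp; ring
  have hD : (2 * (p * (1 - p)) ^ 2) ^ ((3:ℝ)/2) = 2 ^ ((3:ℝ)/2) * (p ^ 3 * (1 - p) ^ 3) := by
    rw [mul_rpow (by norm_num) (by positivity), ← rpow_natCast_mul (by positivity)]
    norm_num; ring
  simp_rw [mul_div_right_comm _ (_ : ℝ) (2 * _)]
  rw [integral_rpow_half_mul_levyHalf_mul_levyHalf ha hb, hsum, div_rpow hS.le (by positivity),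
    rpow_neg hS.le, rpow_neg (by positivity), div_inv_eq_mul, hD, neg_div, rpow_neg hS.le]
  ring
end

section
/- Let t > 0 and y ≥ t. Then (1/(4π)) ∫_{−t}^{t} ( |x|^{−1/2} − t^{−1/2} ) (y − x)^{−3/2} dx = (1/π) · t^{1/2} / [ y ( (y−t)^{1/2} + (y+t)^{1/2} ) ]. -/
open MeasureTheory Set

/-!
Split the integral at `0` and reflect the left half, so that both halves become
`∫₀ᵗ (u^{-1/2} - t^{-1/2}) (y ± u)^{-3/2} du`. Since
`d/du [√u / √(y + s u)] = (y/2) u^{-1/2} (y + s u)^{-3/2}` and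
`d/du (y + s u)^{-1/2} = -(s/2) (y + s u)^{-3/2}`, these halves have elementary primitives and
equal `2 (√(y+t) - √y) / (y √t)` and `2 (√y - √(y-t)) / (y √t)`. Their sum is
`2 (√(y+t) - √(y-t)) / (y √t) = 4 √t / (y (√(y-t) + √(y+t)))`.
-/

open Real intervalIntegral

lemma rpow_neg_half_sub_mul_rpow_neg_three_halves {u t v : ℝ} (hu : 0 ≤ u) (ht : 0 ≤ t)
    (hv : 0 ≤ v) :
    (u ^ (-(1:ℝ)/2) - t ^ (-(1:ℝ)/2)) * v ^ (-(3:ℝ)/2) = ((√u)⁻¹ - (√t)⁻¹) * (√v ^ 3)⁻¹ := by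
  simp only [neg_div, rpow_neg hu, rpow_neg ht, rpow_neg hv, sqrt_eq_rpow, ← rpow_natCast,
    ← rpow_mul hv]
  norm_num

lemma integral_symm_eq_integral_comp_neg_add {f : ℝ → ℝ} {t : ℝ}
    (hneg : IntervalIntegrable (fun x => f (-x)) volume 0 t)
    (hpos : IntervalIntegrable f volume 0 t) :
    ∫ x in -t..t, f x = (∫ x in 0..t, f (-x)) + ∫ x in 0..t, f x := by
  have hleft : IntervalIntegrable f volume (-t) 0 := by
    simpa only [neg_neg, neg_zero] using
      ((IntervalIntegrable.iff_comp_neg (f := fun x => f (-x))).1 hneg).symm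
  rw [← integral_add_adjacent_intervals hleft hpos, integral_comp_neg, neg_zero]

lemma hasDerivAt_sqrt_div_sqrt_add_mul {s x y : ℝ} (hx : 0 < x) (hyx : 0 < y + s * x) :
    HasDerivAt (fun u => √u / √(y + s * u)) (y / 2 * ((√x)⁻¹ * (√(y + s * x) ^ 3)⁻¹)) x := by
  have hden := (((hasDerivAt_id' x).const_mul s).const_add y).sqrt hyx.ne'
  refine ((hasDerivAt_sqrt hx.ne').div hden (sqrt_pos.2 hyx).ne').congr_deriv ?_
  field_simp
  linear_combination sq_sqrt hyx.le - s * sq_sqrt hx.le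

lemma hasDerivAt_inv_sqrt_add_mul {s x y : ℝ} (hyx : 0 < y + s * x) :
    HasDerivAt (fun u => (√(y + s * u))⁻¹) (-(s / 2) * (√(y + s * x) ^ 3)⁻¹) x := by
  have hden := (((hasDerivAt_id' x).const_mul s).const_add y).sqrt hyx.ne'
  refine (hden.inv (sqrt_pos.2 hyx).ne').congr_deriv ?_
  field_simp

lemma hasDerivAt_primitive_inv_sqrt_sub_inv_sqrt_mul {s t x y : ℝ} (hs : s ≠ 0) (hy : y ≠ 0)
    (hx : 0 < x) (hyx : 0 < y + s * x) :
    HasDerivAt (fun u => 2 / y * (√u / √(y + s * u)) + 2 / (s * √t) * (√(y + s * u))⁻¹)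
      (((√x)⁻¹ - (√t)⁻¹) * (√(y + s * x) ^ 3)⁻¹) x := by
  refine (((hasDerivAt_sqrt_div_sqrt_add_mul hx hyx).const_mul _).add
    ((hasDerivAt_inv_sqrt_add_mul hyx).const_mul _)).congr_deriv ?_
  field_simp
  ring

lemma integral_eq_sub_of_hasDerivAt_of_nonneg {f F : ℝ → ℝ} {a b : ℝ} (hab : a ≤ b)
    (hcont : ContinuousOn F (Icc a b)) (hderiv : ∀ x ∈ Ioo a b, HasDerivAt F (f x) x)
    (hpos : ∀ x ∈ Ioo a b, 0 ≤ f x) :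
    IntervalIntegrable f volume a b ∧ ∫ x in a..b, f x = F b - F a := by
  have hint : IntervalIntegrable f volume a b := by
    apply intervalIntegrable_deriv_of_nonneg (g := F) <;>
      simpa only [uIcc_of_le hab, min_eq_left hab, max_eq_right hab]
  exact ⟨hint, integral_eq_sub_of_hasDerivAt_of_le hab hcont hderiv hint⟩

lemma inv_sqrt_sub_inv_sqrt_nonneg {u t : ℝ} (hu : 0 < u) (hut : u ≤ t) :
    0 ≤ (√u)⁻¹ - (√t)⁻¹ :=
  sub_nonneg.2 (inv_anti₀ (sqrt_pos.2 hu) (sqrt_le_sqrt hut))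

lemma continuousOn_sub_div_sqrt_sub {t y : ℝ} (hty : t ≤ y) :
    ContinuousOn (fun u => (t - u) / √(y - u)) (Iic t) := by
  rcases hty.lt_or_eq with hty | rfl
  · refine (continuousOn_const.sub continuousOn_id).div (by fun_prop) fun u hu => ?_
    exact (sqrt_pos.2 (by linarith [mem_Iic.1 hu])).ne'
  · simp only [div_sqrt]
    fun_prop

lemma integral_inv_sqrt_sub_inv_sqrt_mul_add {t y : ℝ} (ht : 0 < t) (hy : 0 < y) :
    IntervalIntegrable (fun u => ((√u)⁻¹ - (√t)⁻¹) * (√(y + u) ^ 3)⁻¹) volume 0 t ∧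
      ∫ u in 0..t, ((√u)⁻¹ - (√t)⁻¹) * (√(y + u) ^ 3)⁻¹ = 2 * (√(y + t) - √y) / (y * √t) := by
  have hderiv : ∀ x ∈ Ioo 0 t, HasDerivAt
      (fun u => 2 / y * (√u / √(y + u)) + 2 / √t * (√(y + u))⁻¹)
      (((√x)⁻¹ - (√t)⁻¹) * (√(y + x) ^ 3)⁻¹) x := fun x hx => by
    simpa only [one_mul] using hasDerivAt_primitive_inv_sqrt_sub_inv_sqrt_mul (t := t)
      one_ne_zero hy.ne' hx.1 (by linarith [hx.1])
  have hcont : ContinuousOn (fun u => 2 / y * (√u / √(y + u)) + 2 / √t * (√(y + u))⁻¹)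
      (Icc 0 t) := by
    have hpos : ∀ u ∈ Icc 0 t, √(y + u) ≠ 0 := fun u hu =>
      (sqrt_pos.2 (by linarith [hu.1])).ne'
    exact (continuousOn_const.mul (by fun_prop (disch := exact hpos))).add
      (continuousOn_const.mul (by fun_prop (disch := exact hpos)))
  obtain ⟨hint, heq⟩ := integral_eq_sub_of_hasDerivAt_of_nonneg ht.le hcont hderiv
    fun x hx => mul_nonneg (inv_sqrt_sub_inv_sqrt_nonneg hx.1 hx.2.le) (by positivity)
  refine ⟨hint, heq.trans ?_⟩
  simp only [sqrt_zero, zero_div, add_zero, mul_zero, zero_add]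
  field_simp
  linear_combination √y * sq_sqrt ht.le - √y * sq_sqrt (by linarith : 0 ≤ y + t)
    + √(y + t) * sq_sqrt hy.le

lemma integral_inv_sqrt_sub_inv_sqrt_mul_sub {t y : ℝ} (ht : 0 < t) (hty : t ≤ y) :
    IntervalIntegrable (fun u => ((√u)⁻¹ - (√t)⁻¹) * (√(y - u) ^ 3)⁻¹) volume 0 t ∧
      ∫ u in 0..t, ((√u)⁻¹ - (√t)⁻¹) * (√(y - u) ^ 3)⁻¹ = 2 * (√y - √(y - t)) / (y * √t) := by
  have hy : 0 < y := ht.trans_le hty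
  -- Unlike the primitive for `s = -1`, this form stays continuous at `u = t` also when `y = t`.
  set F : ℝ → ℝ := fun u => 2 / (y * √t) * (√u / (√t + √u) * ((t - u) / √(y - u)) - √(y - u))
  have hderiv : ∀ x ∈ Ioo 0 t, HasDerivAt F (((√x)⁻¹ - (√t)⁻¹) * (√(y - x) ^ 3)⁻¹) x := by
    intro x hx
    have h := hasDerivAt_primitive_inv_sqrt_sub_inv_sqrt_mul (s := -1) (t := t) (by norm_num)
      hy.ne' hx.1 (by linarith [hx.2])
    simp only [neg_one_mul, ← sub_eq_add_neg] at h
    refine h.congr_of_eventuallyEq ?_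
    filter_upwards [Ioo_mem_nhds hx.1 hx.2] with u hu
    have hyu : 0 < y - u := by linarith [hu.2]
    simp only [F]
    field_simp
    linear_combination -(√u + √t) * sq_sqrt hyu.le - √u * sq_sqrt ht.le - √t * sq_sqrt hu.1.le
  have hcont : ContinuousOn F (Icc 0 t) := by
    have hpos : ∀ u ∈ Icc 0 t, √t + √u ≠ 0 := fun u _ => by positivity
    have hfrac : ContinuousOn (fun u => √u / (√t + √u)) (Icc 0 t) := by
      fun_prop (disch := exact hpos)
    exact continuousOn_const.mul ((hfrac.mul
      ((continuousOn_sub_div_sqrt_sub hty).mono Icc_subset_Iic_self)).sub (by fun_prop))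
  obtain ⟨hint, heq⟩ := integral_eq_sub_of_hasDerivAt_of_nonneg ht.le hcont hderiv
    fun x hx => mul_nonneg (inv_sqrt_sub_inv_sqrt_nonneg hx.1 hx.2.le) (by positivity)
  refine ⟨hint, heq.trans ?_⟩
  simp only [F, sub_self, zero_div, mul_zero, sqrt_zero, zero_mul, sub_zero]
  ring

/-- The symmetric (`p = 1/2`) jump-first Lévy walk density at points `y ≥ t`:
`(1/(4π)) ∫_{−t}^{t} (|x|^{−1/2} − t^{−1/2}) (y−x)^{−3/2} dx
 = (1/π) t^{1/2} / (y ((y−t)^{1/2} + (y+t)^{1/2}))`. -/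
theorem jump_first_density_symmetric_tail (t y : ℝ) (ht : 0 < t) (hy : t ≤ y) :
    (1 / (4 * Real.pi)) *
        ∫ x in (-t)..t, (|x| ^ (-(1:ℝ)/2) - t ^ (-(1:ℝ)/2)) * (y - x) ^ (-(3:ℝ)/2)
      = (1 / Real.pi) * t ^ ((1:ℝ)/2) /
          (y * ((y - t) ^ ((1:ℝ)/2) + (y + t) ^ ((1:ℝ)/2))) := by
  have hy0 : 0 < y := ht.trans_le hy
  set f : ℝ → ℝ := fun x => (|x| ^ (-(1:ℝ)/2) - t ^ (-(1:ℝ)/2)) * (y - x) ^ (-(3:ℝ)/2)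
  have hneg : EqOn (fun u => ((√u)⁻¹ - (√t)⁻¹) * (√(y + u) ^ 3)⁻¹) (fun x => f (-x)) (Icc 0 t) :=
    fun u hu => by
      simp only [f, abs_neg, abs_of_nonneg hu.1, sub_neg_eq_add]
      exact (rpow_neg_half_sub_mul_rpow_neg_three_halves hu.1 ht.le (by linarith [hu.1])).symm
  have hpos : EqOn (fun u => ((√u)⁻¹ - (√t)⁻¹) * (√(y - u) ^ 3)⁻¹) f (Icc 0 t) :=
    fun u hu => by
      simp only [f, abs_of_nonneg hu.1]
      exact (rpow_neg_half_sub_mul_rpow_neg_three_halves hu.1 ht.le (by linarith [hu.2])).symm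
  have hIoc : uIoc 0 t ⊆ Icc 0 t := (uIoc_of_le ht.le).subset.trans Ioc_subset_Icc_self
  have hIcc : uIcc 0 t ⊆ Icc 0 t := (uIcc_of_le ht.le).subset
  obtain ⟨hintL, hL⟩ := integral_inv_sqrt_sub_inv_sqrt_mul_add ht hy0
  obtain ⟨hintR, hR⟩ := integral_inv_sqrt_sub_inv_sqrt_mul_sub ht hy
  rw [integral_symm_eq_integral_comp_neg_add (hintL.congr (hneg.mono hIoc))
      (hintR.congr (hpos.mono hIoc)),
    ← integral_congr (hneg.mono hIcc), ← integral_congr (hpos.mono hIcc),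
    hL, hR, ← sqrt_eq_rpow, ← sqrt_eq_rpow, ← sqrt_eq_rpow]
  have hsum : 0 < √(y - t) + √(y + t) := by
    have := sqrt_pos.2 (by linarith : 0 < y + t); positivity
  field_simp
  linear_combination 2 * sq_sqrt (by linarith : 0 ≤ y + t)
    - 2 * sq_sqrt (by linarith : 0 ≤ y - t) - 4 * sq_sqrt ht.le
end

section
/- Let p ∈ (0,1), t > 0. Then ∫_{−t}^{t} (√2/π) p (1−p) (t − |x|)^{1/2} / [ ( 2p² t + (1−2p)(t+x) ) · ( 2p² |x| + (1−2p)(x+|x|) )^{1/2} ] dx = 1. That is, the closed-form expression of Corollary 2 is a probability density on (−t, t). -/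
/-!
On `(0, t)` the density is a constant multiple of `√(t - x) / (√x (t + (m² - 1) x))` with
`m = √2 (1 - p) / √(p² + (1 - p)²)`, and the reflection `x ↦ -x` turns it into the density for
`1 - p`. The integral of that kernel over `(0, t)` is `π / (m + 1)`, read off from an explicit
primitive built from `arcsin √(x / t)` and an `arctan`. Hence `(0, t)` carries the mass
`p / (s (s + √2 (1 - p)))`, `s = √(p² + (1 - p)²)`, and `(-t, 0)` the same with `p ↔ 1 - p`;
these add up to one because `s² + 2 p (1 - p) = 1`.
-/

open MeasureTheory Set Real

section Primitive

variable {m t y : ℝ}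

theorem hasDerivAt_arcsin_sqrt_div (hy : 0 < y) (hyt : y < t) :
    HasDerivAt (fun y => arcsin √(y / t)) (1 / (2 * √y * √(t - y))) y := by
  have ht : 0 < t := hy.trans hyt
  have hyt' : 0 < y / t := div_pos hy ht
  have hsqrt := ((hasDerivAt_id' y).div_const t).sqrt hyt'.ne'
  have hlt : √(y / t) < 1 := (sqrt_lt' one_pos).2 (by simpa using (div_lt_one ht).2 hyt)
  refine ((hasDerivAt_arcsin (by linarith [sqrt_nonneg (y / t)]) hlt.ne).comp y
    hsqrt).congr_deriv ?_
  rw [sq_sqrt hyt'.le, one_sub_div ht.ne', sqrt_div' _ ht.le, sqrt_div' _ ht.le]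
  field_simp
  rw [sq_sqrt ht.le]

theorem hasDerivAt_sqrt_mul_sub (hy : 0 < y) (hyt : y < t) :
    HasDerivAt (fun y => √(y * (t - y))) ((t - 2 * y) / (2 * √y * √(t - y))) y := by
  have hpoly : HasDerivAt (fun y => y * (t - y)) (t - 2 * y) y :=
    ((hasDerivAt_id' y).mul ((hasDerivAt_id' y).const_sub t)).congr_deriv (by ring)
  refine (hpoly.sqrt (mul_pos hy (by linarith)).ne').congr_deriv ?_
  rw [sqrt_mul hy.le]
  ring

theorem hasDerivAt_arctan_sqrt_mul_sub_div (hm : 0 < m) (hy : 0 < y) (hyt : y < t) :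
    HasDerivAt (fun y => arctan ((m - 1) * √(y * (t - y)) / (t + (m - 1) * y)))
      ((m - 1) * (t - (m + 1) * y) / (2 * √y * √(t - y) * (t + (m ^ 2 - 1) * y))) y := by
  have hD : 0 < t + (m - 1) * y := by nlinarith
  have hquot := ((hasDerivAt_sqrt_mul_sub hy hyt).const_mul (m - 1)).div
    (((hasDerivAt_id' y).const_mul (m - 1)).const_add t) hD.ne'
  refine hquot.arctan.congr_deriv ?_
  simp only [Pi.div_apply]
  rw [sqrt_mul hy.le]
  have h1 := sq_sqrt hy.le
  have h2 := sq_sqrt (by linarith : 0 ≤ t - y)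
  have hq : 1 + ((m - 1) * (√y * √(t - y)) / (t + (m - 1) * y)) ^ 2
      = t * (t + (m ^ 2 - 1) * y) / (t + (m - 1) * y) ^ 2 := by
    field_simp
    rw [h1, h2]
    ring
  have ht : 0 < t := hy.trans hyt
  rw [hq]
  field_simp
  rw [h1, h2, mul_comm y (m - 1)]
  field_simp
  ring

/-- For `x = t sin² θ` the `arctan` term is `arctan (m tan θ) - θ`, written so as to stay
continuous at `x = t`. -/
theorem exists_primitive_sqrt_sub_div (hm : 0 < m) (ht : 0 < t) :
    ∃ F : ℝ → ℝ, ContinuousOn F (Icc 0 t) ∧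
      (∀ y ∈ Ioo 0 t, HasDerivAt F (√(t - y) / (√y * (t + (m ^ 2 - 1) * y))) y) ∧
      F t - F 0 = π / (m + 1) := by
  rcases eq_or_ne m 1 with rfl | hm1
  · refine ⟨fun y => arcsin √(y / t) + √(y * (t - y)) / t, by fun_prop, fun y hy => ?_, ?_⟩
    · refine ((hasDerivAt_arcsin_sqrt_div hy.1 hy.2).add
        ((hasDerivAt_sqrt_mul_sub hy.1 hy.2).div_const t)).congr_deriv ?_
      have : 0 < √(t - y) := sqrt_pos.2 (by linarith [hy.2])
      simp only [one_pow, sub_self, zero_mul, add_zero]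
      field_simp
      rw [sq_sqrt (by linarith [hy.2])]
      ring
    · simp only [div_self ht.ne', sqrt_one, arcsin_one, sub_self, mul_zero, sqrt_zero, zero_div,
        add_zero, arcsin_zero, sub_zero, zero_mul]
      ring
  · have hm2 : m ^ 2 - 1 ≠ 0 := by
      rw [show m ^ 2 - 1 = (m - 1) * (m + 1) by ring]
      exact mul_ne_zero (sub_ne_zero.2 hm1) (by linarith)
    have hD : ∀ y ∈ Icc 0 t, t + (m - 1) * y ≠ 0 := fun y hy => by
      nlinarith [mul_pos hm ht, mul_nonneg hm.le hy.1, hy.2]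
    refine ⟨fun y => 2 * ((m - 1) * arcsin √(y / t) +
      m * arctan ((m - 1) * √(y * (t - y)) / (t + (m - 1) * y))) / (m ^ 2 - 1),
      by fun_prop (disch := assumption), fun y hy => ?_, ?_⟩
    · refine (((((hasDerivAt_arcsin_sqrt_div hy.1 hy.2).const_mul (m - 1)).add
        ((hasDerivAt_arctan_sqrt_mul_sub_div hm hy.1 hy.2).const_mul m)).const_mul 2).div_const
        (m ^ 2 - 1)).congr_deriv ?_
      have : 0 < √(t - y) := sqrt_pos.2 (by linarith [hy.2])
      have : t + y * (m ^ 2 - 1) ≠ 0 := by nlinarith [hy.1, hy.2, mul_nonneg hm.le hy.1.le]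
      field_simp
      rw [sq_sqrt (by linarith [hy.2])]
      ring
    · simp only [div_self ht.ne', sqrt_one, arcsin_one, sub_self, mul_zero, sqrt_zero, zero_div,
        arctan_zero, add_zero, arcsin_zero, sub_zero, zero_mul]
      rw [div_eq_div_iff hm2 (by positivity)]
      ring

end Primitive

noncomputable def waitFirstDensity (p t x : ℝ) : ℝ :=
  √2 / π * (p * (1 - p)) * (t - |x|) ^ ((1:ℝ)/2) /
    ((2 * p^2 * t + (1 - 2*p) * (t + x)) * (2 * p^2 * |x| + (1 - 2*p) * (x + |x|)) ^ ((1:ℝ)/2))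

variable {p t x : ℝ}

theorem waitFirstDensity_neg : waitFirstDensity p t (-x) = waitFirstDensity (1 - p) t x := by
  simp only [waitFirstDensity, abs_neg]
  ring_nf

theorem waitFirstDensity_of_pos (hp : p < 1) (hx : 0 < x) :
    waitFirstDensity p t x =
      p / π * (√(t - x) / (√x * ((p^2 + (1-p)^2) * t + (1 - 2*p) * x))) := by
  have hsq : 2 * p^2 * x + (1 - 2*p) * (x + x) = (√2 * (1 - p)) ^ 2 * x := by
    rw [mul_pow, sq_sqrt zero_le_two]; ring
  rw [waitFirstDensity, abs_of_pos hx, ← sqrt_eq_rpow, ← sqrt_eq_rpow, hsq,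
    sqrt_mul (sq_nonneg _), sqrt_sq (by positivity)]
  have : 0 < 1 - p := by linarith
  field_simp
  ring

/-- The probability of `X(t) > 0`; it does not depend on `t`. -/
noncomputable def waitFirstPositiveMass (p : ℝ) : ℝ :=
  p / (√(p^2 + (1-p)^2) * (√(p^2 + (1-p)^2) + √2 * (1 - p)))

theorem waitFirstPositiveMass_add_one_sub (p : ℝ) :
    waitFirstPositiveMass p + waitFirstPositiveMass (1 - p) = 1 := by
  have hq : (1 - p)^2 + (1 - (1 - p))^2 = p^2 + (1-p)^2 := by ring
  rw [waitFirstPositiveMass, waitFirstPositiveMass, hq, sub_sub_cancel]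
  set s := √(p^2 + (1-p)^2)
  have hs : 0 < s := sqrt_pos.2 (by nlinarith [sq_nonneg (2 * p - 1)])
  have hs2 : s ^ 2 = p^2 + (1-p)^2 := sq_sqrt (by positivity)
  have hr2 : √2 ^ 2 = 2 := sq_sqrt zero_le_two
  have hr : 0 < √2 := by positivity
  have : 0 < s + √2 * (1 - p) := by nlinarith [mul_pos hr hs]
  have : 0 < s + √2 * p := by nlinarith [mul_pos hr hs]
  rw [div_add_div _ _ (by positivity) (by positivity), div_eq_one_iff_eq (by positivity)]
  linear_combination s * (-(√2 + s) * hs2 - s * p * (1 - p) * hr2)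

theorem integral_waitFirstDensity (hp : p ∈ Ioo 0 1) (ht : 0 < t) :
    IntervalIntegrable (waitFirstDensity p t) volume 0 t ∧
      ∫ x in 0..t, waitFirstDensity p t x = waitFirstPositiveMass p := by
  obtain ⟨hp0, hp1⟩ := hp
  set s := √(p^2 + (1-p)^2)
  have hs : 0 < s := sqrt_pos.2 (by positivity)
  have hs2 : s ^ 2 = p^2 + (1-p)^2 := sq_sqrt (by positivity)
  set m := √2 * (1 - p) / s
  have hm : 0 < m := div_pos (mul_pos (by positivity) (by linarith)) hs
  have hm2 : s ^ 2 * (m ^ 2 - 1) = 1 - 2 * p := by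
    rw [div_pow, mul_pow, sq_sqrt zero_le_two, mul_sub, mul_div_cancel₀ _ (by positivity), hs2]
    ring
  obtain ⟨F, hFc, hFd, hFv⟩ := exists_primitive_sqrt_sub_div hm ht
  have hf : ∀ y ∈ Ioo 0 t,
      waitFirstDensity p t y = p / (π * s^2) * (√(t - y) / (√y * (t + (m ^ 2 - 1) * y))) := by
    intro y hy
    rw [waitFirstDensity_of_pos hp1 hy.1, ← hs2, ← hm2]
    field_simp
  have hderiv : ∀ y ∈ Ioo 0 t,
      HasDerivAt (fun y => p / (π * s^2) * F y) (waitFirstDensity p t y) y :=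
    fun y hy => hf y hy ▸ (hFd y hy).const_mul _
  have hnonneg : ∀ y ∈ Ioo 0 t, 0 ≤ waitFirstDensity p t y := by
    intro y hy
    have : 0 < t + (m ^ 2 - 1) * y := by nlinarith [mul_nonneg (sq_nonneg m) hy.1.le, hy.2]
    rw [hf y hy]
    positivity
  have hcont : ContinuousOn (fun y => p / (π * s^2) * F y) (Icc 0 t) :=
    continuousOn_const.mul hFc
  have hint : IntervalIntegrable (waitFirstDensity p t) volume 0 t :=
    (intervalIntegrable_iff_integrableOn_Ioc_of_le ht.le).2
      (intervalIntegral.integrableOn_deriv_of_nonneg hcont hderiv hnonneg)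
  refine ⟨hint, ?_⟩
  change _ = p / (s * (s + √2 * (1 - p)))
  rw [intervalIntegral.integral_eq_sub_of_hasDerivAt_of_le ht.le hcont hderiv hint, ← mul_sub, hFv]
  have hsm : s * m = √2 * (1 - p) := mul_div_cancel₀ _ hs.ne'
  field_simp
  linear_combination -hsm

/-- The closed-form expression of Corollary 2 is a probability density on `(−t, t)`:
for `p ∈ (0,1)` and `t > 0`,
`∫_{−t}^{t} (√2/π) p(1−p) (t−|x|)^{1/2}
    / ((2p²t + (1−2p)(t+x)) (2p²|x| + (1−2p)(x+|x|))^{1/2}) dx = 1`. -/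
theorem wait_first_density_integrates_to_one (p t : ℝ) (hp : p ∈ Ioo (0:ℝ) 1) (ht : 0 < t) :
    ∫ x in (-t)..t,
        Real.sqrt 2 / Real.pi * (p * (1 - p)) * (t - |x|) ^ ((1:ℝ)/2) /
          ((2 * p^2 * t + (1 - 2*p) * (t + x)) *
            (2 * p^2 * |x| + (1 - 2*p) * (x + |x|)) ^ ((1:ℝ)/2))
      = 1 := by
  have hp_one_sub : 1 - p ∈ Ioo (0:ℝ) 1 := ⟨sub_pos.2 hp.2, sub_lt_self 1 hp.1⟩
  obtain ⟨hint, hval⟩ := integral_waitFirstDensity hp ht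
  obtain ⟨hint_one_sub, hval_one_sub⟩ := integral_waitFirstDensity hp_one_sub ht
  have hint_neg : IntervalIntegrable (waitFirstDensity p t) volume (-t) 0 := by
    rw [IntervalIntegrable.iff_comp_neg, neg_neg, neg_zero]
    simpa only [waitFirstDensity_neg] using hint_one_sub.symm
  have hval_neg : ∫ x in (-t)..0, waitFirstDensity p t x = waitFirstPositiveMass (1 - p) := by
    rw [← hval_one_sub, ← neg_zero, ← intervalIntegral.integral_comp_neg, neg_zero]
    simp only [waitFirstDensity_neg]
  change ∫ x in (-t)..t, waitFirstDensity p t x = 1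
  rw [← intervalIntegral.integral_add_adjacent_intervals hint_neg hint, hval_neg, hval, add_comm]
  exact waitFirstPositiveMass_add_one_sub p
end

section
/- Let p ∈ (0,1) and let x, s be real with |x| < s. Then (1/(2 p² (1−p)²)) ∫₀^∞ u^{−4} · r_{1/2}( (s+x) / (2p² u²) ) · r_{1/2}( (s−x) / (2(1−p)² u²) ) du = ( p(1−p)/√(2π) ) · ( p²(s−x) + (1−p)²(s+x) )^{−3/2}. The left-hand side is the 0-potential density u(x,s) = ∫₀^∞ w_u(x,s) du of the coupled process (L_{1/2}(t), S_{1/2}(t)), where w_u(x,s) = (1/(2p²(1−p)²)) q_u((s+x)/(2p²)) q_u((s−x)/(2(1−p)²)) and q_u(v) = u^{−2} r_{1/2}(v/u²) is the density of the 1/2-stable subordinator at time u. -/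
open MeasureTheory Set

/-!
For `a > 0`, `r_{1/2}(a / u²) = a^{-3/2} u³ e^{-u²/(4a)} / (2√π)`, so the integrand
`u^{-4} r_{1/2}(a/u²) r_{1/2}(b/u²)` is a multiple of the Gaussian moment `u² e^{-c u²}` with
`c = 1/(4a) + 1/(4b) = (a + b)/(4ab)`. Since `∫₀^∞ u² e^{-c u²} du = (√π/4) c^{-3/2}`, the integral
equals `(a + b)^{-3/2} / (2√π)`. With `a = (s+x)/(2p²)` and `b = (s−x)/(2(1−p)²)` one has
`a + b = (p²(s−x) + (1−p)²(s+x)) / (2p²(1−p)²)`.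
-/

open Real

lemma levyHalf_div_sq {a u : ℝ} (ha : 0 < a) (hu : 0 < u) :
    levyHalf (a / u ^ 2) = a ^ (-(3:ℝ)/2) / (2 * √π) * u ^ 3 * exp (-u ^ 2 / (4 * a)) := by
  have hu2 : 0 < u ^ 2 := by positivity
  have hu3 : (u ^ 2) ^ (-(3:ℝ)/2) = (u ^ 3)⁻¹ := by
    rw [← rpow_natCast u 2, ← rpow_mul hu.le, ← rpow_natCast, ← rpow_neg hu.le]
    norm_num
  rw [levyHalf, if_pos (div_pos ha hu2), div_rpow ha.le hu2.le, hu3]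
  field_simp

lemma integral_sq_mul_exp_neg_mul_sq {c : ℝ} (hc : 0 < c) :
    ∫ u in Ioi (0:ℝ), u ^ 2 * exp (-c * u ^ 2) = √π / 4 * c ^ (-(3:ℝ)/2) := by
  have h := integral_rpow_mul_exp_neg_mul_rpow (q := 2) two_pos (by norm_num) hc
  have hΓ : Gamma ((2 + 1) / 2) = √π / 2 := by
    rw [show ((2:ℝ) + 1) / 2 = 1 / 2 + 1 by norm_num, Gamma_add_one (by norm_num),
      Gamma_one_half_eq]
    ring
  simp only [rpow_two, hΓ] at h
  rw [h]
  norm_num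
  ring

lemma integral_levyHalf_div_sq_mul {a b : ℝ} (ha : 0 < a) (hb : 0 < b) :
    ∫ u in Ioi (0:ℝ), u ^ (-(4:ℝ)) * levyHalf (a / u ^ 2) * levyHalf (b / u ^ 2)
      = (a + b) ^ (-(3:ℝ)/2) / (2 * √π) := by
  set c := 1 / (4 * a) + 1 / (4 * b)
  have hc : 0 < c := by positivity
  have hintegrand : ∀ u ∈ Ioi (0:ℝ), u ^ (-(4:ℝ)) * levyHalf (a / u ^ 2) * levyHalf (b / u ^ 2)
      = (a ^ (-(3:ℝ)/2) * b ^ (-(3:ℝ)/2) / (4 * π)) * (u ^ 2 * exp (-c * u ^ 2)) := by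
    intro u hu
    have hu : 0 < u := hu
    have hpow : u ^ (-(4:ℝ)) = (u ^ 4)⁻¹ := by rw [rpow_neg hu.le]; norm_cast
    have hexp : exp (-u ^ 2 / (4 * a)) * exp (-u ^ 2 / (4 * b)) = exp (-c * u ^ 2) := by
      rw [← exp_add]
      congr 1
      simp only [c]
      ring
    rw [levyHalf_div_sq ha hu, levyHalf_div_sq hb hu, hpow, ← hexp]
    field_simp
    rw [sq_sqrt pi_pos.le]
    ring
  rw [setIntegral_congr_fun measurableSet_Ioi hintegrand, integral_const_mul,
    integral_sq_mul_exp_neg_mul_sq hc]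
  have hsum : (a + b) ^ (-(3:ℝ)/2)
      = c ^ (-(3:ℝ)/2) * 4 ^ (-(3:ℝ)/2) * a ^ (-(3:ℝ)/2) * b ^ (-(3:ℝ)/2) := by
    rw [show a + b = c * 4 * a * b by simp only [c]; field_simp; ring, mul_rpow, mul_rpow, mul_rpow]
    all_goals positivity
  have h4 : (4:ℝ) ^ (-(3:ℝ)/2) = 1 / 8 := by
    rw [show (4:ℝ) = 2 ^ (2:ℝ) by norm_num, ← rpow_mul two_pos.le]
    norm_num
  rw [hsum, h4]
  field_simp
  rw [sq_sqrt pi_pos.le]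
  ring

lemma div_rpow_neg_three_halves {D m : ℝ} (hD : 0 ≤ D) (hm : 0 < m) :
    (D / m) ^ (-(3:ℝ)/2) = m * √m * D ^ (-(3:ℝ)/2) := by
  have hm32 : m ^ ((3:ℝ)/2) = m * √m := by
    rw [show (3:ℝ)/2 = 1 + 1/2 by norm_num, rpow_add hm, rpow_one, sqrt_eq_rpow]
  rw [div_rpow hD hm.le, neg_div, rpow_neg hm.le, hm32, div_inv_eq_mul, mul_comm]

/-- The 0-potential density of the coupled process `(L_{1/2}(t), S_{1/2}(t))`:
for `p ∈ (0,1)` and `|x| < s`,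
`(1/(2p²(1−p)²)) ∫₀^∞ u^{−4} r_{1/2}((s+x)/(2p²u²)) r_{1/2}((s−x)/(2(1−p)²u²)) du
 = (p(1−p)/√(2π)) (p²(s−x) + (1−p)²(s+x))^{−3/2}`. -/
theorem potential_density_half (p x s : ℝ) (hp : p ∈ Ioo (0:ℝ) 1) (hxs : |x| < s) :
    (1 / (2 * p^2 * (1 - p)^2)) *
      ∫ u in Ioi (0:ℝ),
        u ^ (-(4:ℝ)) * levyHalf ((s + x) / (2 * p^2 * u^2)) *
          levyHalf ((s - x) / (2 * (1 - p)^2 * u^2))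
      = (p * (1 - p) / Real.sqrt (2 * Real.pi)) *
          (p^2 * (s - x) + (1 - p)^2 * (s + x)) ^ (-(3:ℝ)/2) := by
  obtain ⟨hp₀, hp₁⟩ := hp
  have hq : 0 < 1 - p := sub_pos.mpr hp₁
  obtain ⟨hxs₁, hxs₂⟩ := abs_lt.mp hxs
  have hplus : 0 < s + x := by linarith
  have hminus : 0 < s - x := by linarith
  set m := 2 * p ^ 2 * (1 - p) ^ 2
  set D := p ^ 2 * (s - x) + (1 - p) ^ 2 * (s + x)
  have hm : 0 < m := by positivity
  have hD : 0 < D := by positivity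
  have hintegral : ∫ u in Ioi (0:ℝ), u ^ (-(4:ℝ)) * levyHalf ((s + x) / (2 * p^2 * u^2)) *
        levyHalf ((s - x) / (2 * (1 - p)^2 * u^2))
      = ∫ u in Ioi (0:ℝ), u ^ (-(4:ℝ)) * levyHalf ((s + x) / (2 * p^2) / u^2) *
        levyHalf ((s - x) / (2 * (1 - p)^2) / u^2) := by
    simp only [div_div]
  have hsum : (s + x) / (2 * p ^ 2) + (s - x) / (2 * (1 - p) ^ 2) = D / m := by
    simp only [D, m]
    field_simp
    ring
  have hsqrt : √m = √2 * (p * (1 - p)) := by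
    rw [show m = 2 * (p * (1 - p)) ^ 2 by ring, sqrt_mul two_pos.le, sqrt_sq (by positivity)]
  rw [hintegral, integral_levyHalf_div_sq_mul (by positivity) (by positivity), hsum,
    div_rpow_neg_three_halves hD.le hm, hsqrt, sqrt_mul two_pos.le]
  field_simp
  exact sq_sqrt zero_le_two
end
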